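/- For any k with 1 ≤ k ≤ n/2 and any circuit of adjacent CNOT gates computing a matrix M ∈ GL_n(F_2), the number of gates acting between wires k and k+1 is at least rank(X) + rank(Y), where X is the top-right k×(n-k) block and Y the bottom-left (n-k)×k block of M. -/

import Mathlib

open Matrix

/-- The matrix with a single `1` in position `(i, j)`, over `F_2`. -/
def stdE (n : ℕ) (i j : Fin n) : Matrix (Fin n) (Fin n) (ZMod 2) :=
  Matrix.single i j 1

/-- `A` is an adjacent elementary ("adjacent CNOT") matrix:
`A = 1 + E_{i,i+1}` or `A = 1 + E_{i+1,i}` (0-indexed). -/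
def IsAdjElem (n : ℕ) (A : Matrix (Fin n) (Fin n) (ZMod 2)) : Prop :=
  ∃ i : ℕ, ∃ h : i + 1 < n,
    A = 1 + stdE n ⟨i, by omega⟩ ⟨i + 1, h⟩ ∨ A = 1 + stdE n ⟨i + 1, h⟩ ⟨i, by omega⟩

/-- The matrix of a gate `(i, d)`.  As a column operation (acting on the right),
`(i, true)` adds column `i` into column `i+1` and `(i, false)` adds column `i+1`
into column `i` (0-indexed). -/
def gateMat (n : ℕ) (g : ℕ × Bool) : Matrix (Fin n) (Fin n) (ZMod 2) :=
  if h : g.1 + 1 < n then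
    if g.2 then 1 + stdE n ⟨g.1, by omega⟩ ⟨g.1 + 1, h⟩
    else 1 + stdE n ⟨g.1 + 1, h⟩ ⟨g.1, by omega⟩
  else 1

/-- The matrix computed by a sequence of gates applied in order to the identity. -/
def listMat (n : ℕ) (L : List (ℕ × Bool)) : Matrix (Fin n) (Fin n) (ZMod 2) :=
  (L.map (gateMat n)).prod

/-- A valid time-slice on `n` wires: all gates in range, with pairwise disjoint
wire pairs `{i, i+1}`. -/
def ValidSlice (n : ℕ) (s : List (ℕ × Bool)) : Prop :=
  (∀ g ∈ s, g.1 + 1 < n) ∧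
    s.Pairwise fun g g' => g.1 + 2 ≤ g'.1 ∨ g'.1 + 2 ≤ g.1

/-- A valid circuit: a sequence of valid time-slices. -/
def ValidCircuit (n : ℕ) (C : List (List (ℕ × Bool))) : Prop :=
  ∀ s ∈ C, ValidSlice n s

/-- The matrix computed by a circuit (time-slices applied in order). -/
def circuitMat (n : ℕ) (C : List (List (ℕ × Bool))) : Matrix (Fin n) (Fin n) (ZMod 2) :=
  (C.map (listMat n)).prod

/-- The size (total number of gates) of a circuit. -/
def circuitSize (C : List (List (ℕ × Bool))) : ℕ := (C.map List.length).sum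

/-- The reversal permutation matrix: `R i j = 1` iff `i + j = n + 1` (1-indexed). -/
def revMat (n : ℕ) : Matrix (Fin n) (Fin n) (ZMod 2) :=
  Matrix.of fun i j => if i.val + j.val + 1 = n then 1 else 0

/-- Top-left `k × k` block. -/
def blkW (n k : ℕ) (h : k ≤ n) (M : Matrix (Fin n) (Fin n) (ZMod 2)) :
    Matrix (Fin k) (Fin k) (ZMod 2) :=
  M.submatrix (fun i => ⟨i.val, lt_of_lt_of_le i.isLt h⟩)
    (fun j => ⟨j.val, lt_of_lt_of_le j.isLt h⟩)

/-- Top-right `k × (n-k)` block. -/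
def blkX (n k : ℕ) (h : k ≤ n) (M : Matrix (Fin n) (Fin n) (ZMod 2)) :
    Matrix (Fin k) (Fin (n - k)) (ZMod 2) :=
  M.submatrix (fun i => ⟨i.val, lt_of_lt_of_le i.isLt h⟩)
    (fun j => ⟨k + j.val, by have := j.isLt; omega⟩)

/-- Bottom-left `(n-k) × k` block. -/
def blkY (n k : ℕ) (h : k ≤ n) (M : Matrix (Fin n) (Fin n) (ZMod 2)) :
    Matrix (Fin (n - k)) (Fin k) (ZMod 2) :=
  M.submatrix (fun i => ⟨k + i.val, by have := i.isLt; omega⟩)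
    (fun j => ⟨j.val, lt_of_lt_of_le j.isLt h⟩)

/-- Bottom-right `(n-k) × (n-k)` block. -/
def blkZ (n k : ℕ) (h : k ≤ n) (M : Matrix (Fin n) (Fin n) (ZMod 2)) :
    Matrix (Fin (n - k)) (Fin (n - k)) (ZMod 2) :=
  M.submatrix (fun i => ⟨k + i.val, by have := i.isLt; omega⟩)
    (fun j => ⟨k + j.val, by have := j.isLt; omega⟩)


section AuxLemmas

lemma myRank_add_le {m p : Type*} [Fintype m] [Fintype p] [DecidableEq p]
    (A B : Matrix m p (ZMod 2)) : (A + B).rank ≤ A.rank + B.rank := by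
  rw [Matrix.rank, Matrix.rank, Matrix.rank, Matrix.mulVecLin_add]
  have hle : LinearMap.range (A.mulVecLin + B.mulVecLin) ≤
      LinearMap.range A.mulVecLin ⊔ LinearMap.range B.mulVecLin := by
    rintro x ⟨y, rfl⟩
    exact Submodule.mem_sup.mpr ⟨_, ⟨y, rfl⟩, _, ⟨y, rfl⟩, rfl⟩
  exact (Submodule.finrank_mono hle).trans
    (Submodule.finrank_add_le_finrank_add_finrank _ _)

lemma mul_one_add_std {m p : ℕ} (A : Matrix (Fin m) (Fin p) (ZMod 2)) (i j : Fin p)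
    (a : Fin m) (b : Fin p) :
    (A * ((1 + Matrix.single i j 1 : Matrix (Fin p) (Fin p) (ZMod 2)))) a b
      = A a b + (if b = j then A a i else 0) := by
  rw [Matrix.mul_add, Matrix.mul_one, Matrix.add_apply]
  congr 1
  rw [Matrix.mul_apply]
  simp only [Matrix.single, Matrix.of_apply, mul_ite, mul_one, mul_zero]
  rcases eq_or_ne b j with rfl | hb
  · rw [Finset.sum_eq_single i] <;> simp +contextual [eq_comm]
  · simp [hb, Finset.sum_eq_zero,
      fun c : Fin p => (by simp [hb.symm, Ne.symm hb] :
        (if i = c ∧ j = b then A a c else 0) = 0)]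

lemma rank_colUpdate {m p : ℕ} (u : Fin m → ZMod 2) (j : Fin p) :
    (Matrix.of fun a b => if b = j then u a else 0 : Matrix (Fin m) (Fin p) (ZMod 2)).rank ≤ 1 := by
  have h : (Matrix.of fun a b => if b = j then u a else 0 : Matrix (Fin m) (Fin p) (ZMod 2)) =
      (Matrix.of fun a (_ : Fin 1) => u a) *
        (Matrix.of fun (_ : Fin 1) b => if b = j then (1 : ZMod 2) else 0) := by
    ext a b
    simp [Matrix.mul_apply, mul_ite]
  rw [h]
  exact (Matrix.rank_mul_le_left _ _).trans
    ((Matrix.rank_le_card_width _).trans (by simp))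

variable {n k : ℕ} (hkn : k ≤ n) (M : Matrix (Fin n) (Fin n) (ZMod 2)) (I J : Fin n)

lemma blkX_noop (hJ : (J : ℕ) < k) :
    blkX n k hkn (M * (1 + stdE n I J)) = blkX n k hkn M := by
  ext a b
  simp only [blkX, Matrix.submatrix_apply, stdE, mul_one_add_std]
  rw [if_neg, add_zero]
  intro h
  rw [Fin.ext_iff] at h
  simp at h; omega

lemma blkY_noop (hJ : k ≤ (J : ℕ)) :
    blkY n k hkn (M * (1 + stdE n I J)) = blkY n k hkn M := by
  ext a b
  simp only [blkY, Matrix.submatrix_apply, stdE, mul_one_add_std]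
  rw [if_neg, add_zero]
  intro h
  rw [Fin.ext_iff] at h
  simp at h; omega

lemma blkX_update (hJ : k ≤ (J : ℕ)) :
    blkX n k hkn (M * (1 + stdE n I J)) = blkX n k hkn M +
      Matrix.of (fun a (b : Fin (n - k)) =>
        if b = (⟨(J : ℕ) - k, by have := J.isLt; omega⟩ : Fin (n - k)) then
          M ⟨a.val, by have := a.isLt; omega⟩ I else 0) := by
  ext a b
  simp only [blkX, Matrix.submatrix_apply, stdE, mul_one_add_std, Matrix.add_apply,
    Matrix.of_apply]
  congr 1
  have : ((⟨k + b.val, by have := b.isLt; omega⟩ : Fin n) = J)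
      ↔ (b = (⟨(J : ℕ) - k, by have := J.isLt; omega⟩ : Fin (n - k))) := by
    rw [Fin.ext_iff, Fin.ext_iff]; simp; omega
  simp only [this]

lemma blkY_update (hJ : (J : ℕ) < k) :
    blkY n k hkn (M * (1 + stdE n I J)) = blkY n k hkn M +
      Matrix.of (fun (a : Fin (n - k)) (b : Fin k) =>
        if b = (⟨(J : ℕ), hJ⟩ : Fin k) then
          M ⟨k + a.val, by have := a.isLt; omega⟩ I else 0) := by
  ext a b
  simp only [blkY, Matrix.submatrix_apply, stdE, mul_one_add_std, Matrix.add_apply,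
    Matrix.of_apply]
  congr 1
  have : ((⟨b.val, by have := b.isLt; omega⟩ : Fin n) = J)
      ↔ (b = (⟨(J : ℕ), hJ⟩ : Fin k)) := by
    simp [Fin.ext_iff]
  simp only [this]

lemma blkX_mul (hI : k ≤ (I : ℕ)) (hJ : k ≤ (J : ℕ)) :
    blkX n k hkn (M * (1 + stdE n I J)) = blkX n k hkn M *
      ((1 + Matrix.single (⟨(I : ℕ) - k, by have := I.isLt; omega⟩ : Fin (n - k))
        (⟨(J : ℕ) - k, by have := J.isLt; omega⟩ : Fin (n - k)) 1 :
          Matrix (Fin (n - k)) (Fin (n - k)) (ZMod 2))) := by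
  rw [blkX_update hkn M I J hJ]
  ext a b
  rw [mul_one_add_std]
  simp only [Matrix.add_apply, Matrix.of_apply, blkX, Matrix.submatrix_apply]
  congr 2 <;> (congr 1; apply Fin.ext; simp; omega)

lemma blkY_mul (hI : (I : ℕ) < k) (hJ : (J : ℕ) < k) :
    blkY n k hkn (M * (1 + stdE n I J)) = blkY n k hkn M *
      ((1 + Matrix.single (⟨(I : ℕ), hI⟩ : Fin k) (⟨(J : ℕ), hJ⟩ : Fin k) 1 :
          Matrix (Fin k) (Fin k) (ZMod 2))) := by
  rw [blkY_update hkn M I J hJ]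
  ext a b
  rw [mul_one_add_std]
  simp only [Matrix.add_apply, Matrix.of_apply, blkY, Matrix.submatrix_apply]

lemma rank_blkX_update_le (hJ : k ≤ (J : ℕ)) :
    (blkX n k hkn (M * (1 + stdE n I J))).rank ≤ (blkX n k hkn M).rank + 1 := by
  rw [blkX_update hkn M I J hJ]
  exact (myRank_add_le _ _).trans (by gcongr; exact rank_colUpdate _ _)

lemma rank_blkY_update_le (hJ : (J : ℕ) < k) :
    (blkY n k hkn (M * (1 + stdE n I J))).rank ≤ (blkY n k hkn M).rank + 1 := by
  rw [blkY_update hkn M I J hJ]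
  exact (myRank_add_le _ _).trans (by gcongr; exact rank_colUpdate _ _)

lemma gate_step (hk1 : 1 ≤ k) (g : ℕ × Bool) (hg : g.1 + 1 < n) :
    (blkX n k hkn (M * gateMat n g)).rank + (blkY n k hkn (M * gateMat n g)).rank ≤
      (blkX n k hkn M).rank + (blkY n k hkn M).rank + (if g.1 = k - 1 then 1 else 0) := by
  obtain ⟨m, d⟩ := g
  simp only at hg ⊢
  rw [gateMat, dif_pos hg]
  cases d
  · -- d = false : adds column m+1 into column m, so I = m+1, J = m
    simp only [Bool.false_eq_true, if_false]
    rcases Nat.lt_trichotomy m (k - 1) with hm | hm | hm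
    · rw [if_neg (by omega), blkX_noop hkn M ⟨m + 1, hg⟩ ⟨m, by omega⟩ (show m < k by omega),
        blkY_mul hkn M ⟨m + 1, hg⟩ ⟨m, by omega⟩ (show m + 1 < k by omega) (show m < k by omega),
        add_zero]
      exact add_le_add le_rfl (Matrix.rank_mul_le_left _ _)
    · rw [if_pos (by omega), blkX_noop hkn M ⟨m + 1, hg⟩ ⟨m, by omega⟩ (show m < k by omega)]
      have h := rank_blkY_update_le hkn M ⟨m + 1, hg⟩ ⟨m, by omega⟩ (show m < k by omega)
      calc (blkX n k hkn M).rank + (blkY n k hkn (M * (1 + stdE n ⟨m + 1, hg⟩ ⟨m, by omega⟩))).rank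
          ≤ (blkX n k hkn M).rank + ((blkY n k hkn M).rank + 1) := add_le_add le_rfl h
        _ = (blkX n k hkn M).rank + (blkY n k hkn M).rank + 1 := by ring
    · rw [if_neg (by omega), blkY_noop hkn M ⟨m + 1, hg⟩ ⟨m, by omega⟩ (show k ≤ m by omega),
        blkX_mul hkn M ⟨m + 1, hg⟩ ⟨m, by omega⟩ (show k ≤ m + 1 by omega) (show k ≤ m by omega),
        add_zero]
      exact add_le_add (Matrix.rank_mul_le_left _ _) le_rfl
  · -- d = true : adds column m into column m+1, so I = m, J = m+1
    simp only [if_true]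
    rcases Nat.lt_trichotomy m (k - 1) with hm | hm | hm
    · rw [if_neg (by omega), blkX_noop hkn M ⟨m, by omega⟩ ⟨m + 1, hg⟩ (show m + 1 < k by omega),
        blkY_mul hkn M ⟨m, by omega⟩ ⟨m + 1, hg⟩ (show m < k by omega) (show m + 1 < k by omega),
        add_zero]
      exact add_le_add le_rfl (Matrix.rank_mul_le_left _ _)
    · rw [if_pos (by omega), blkY_noop hkn M ⟨m, by omega⟩ ⟨m + 1, hg⟩ (show k ≤ m + 1 by omega)]
      have h := rank_blkX_update_le hkn M ⟨m, by omega⟩ ⟨m + 1, hg⟩ (show k ≤ m + 1 by omega)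
      calc (blkX n k hkn (M * (1 + stdE n ⟨m, by omega⟩ ⟨m + 1, hg⟩))).rank + (blkY n k hkn M).rank
          ≤ ((blkX n k hkn M).rank + 1) + (blkY n k hkn M).rank := add_le_add h le_rfl
        _ = (blkX n k hkn M).rank + (blkY n k hkn M).rank + 1 := by ring
    · rw [if_neg (by omega), blkY_noop hkn M ⟨m, by omega⟩ ⟨m + 1, hg⟩ (show k ≤ m + 1 by omega),
        blkX_mul hkn M ⟨m, by omega⟩ ⟨m + 1, hg⟩ (show k ≤ m by omega) (show k ≤ m + 1 by omega),
        add_zero]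
      exact add_le_add (Matrix.rank_mul_le_left _ _) le_rfl

lemma listMat_append_single (L : List (ℕ × Bool)) (g : ℕ × Bool) :
    listMat n (L ++ [g]) = listMat n L * gateMat n g := by
  simp [listMat]

lemma blkX_one : blkX n k hkn (1 : Matrix (Fin n) (Fin n) (ZMod 2)) = 0 := by
  ext a b
  simp only [blkX, Matrix.submatrix_apply, Matrix.zero_apply]
  rw [Matrix.one_apply_ne]
  intro h
  rw [Fin.ext_iff] at h
  simp at h
  omega

lemma blkY_one : blkY n k hkn (1 : Matrix (Fin n) (Fin n) (ZMod 2)) = 0 := by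
  ext a b
  simp only [blkY, Matrix.submatrix_apply, Matrix.zero_apply]
  rw [Matrix.one_apply_ne]
  intro h
  rw [Fin.ext_iff] at h
  simp at h
  omega

end AuxLemmas

/-- for `1 ≤ k ≤ n/2`, any sequence of adjacent column operations
computing `M` has at least `rank X + rank Y` gates acting between wires `k` and
`k+1` (1-indexed; these are the gates `(k-1, d)`, 0-indexed), where `X` and `Y`
are the top-right and bottom-left blocks of `M`. -/
theorem stmt19 (n k : ℕ) (hk1 : 1 ≤ k) (hk : k ≤ n / 2)
    (L : List (ℕ × Bool)) (hvalid : ∀ g ∈ L, g.1 + 1 < n)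
    (M : Matrix (Fin n) (Fin n) (ZMod 2)) (hL : listMat n L = M) :
    (blkX n k (by omega) M).rank + (blkY n k (by omega) M).rank ≤
      (L.filter fun g => g.1 == k - 1).length := by
  subst hL
  have hkn : k ≤ n := by omega
  revert hvalid
  induction L using List.reverseRecOn with
  | nil =>
    intro _
    have h1 : listMat n ([] : List (ℕ × Bool)) = 1 := by simp [listMat]
    rw [h1, blkX_one, blkY_one, Matrix.rank_zero, Matrix.rank_zero]
    simp
  | append_singleton L g ih =>
    intro hvalid
    have hg : g.1 + 1 < n := hvalid g (by simp)
    have hL' : ∀ x ∈ L, x.1 + 1 < n := fun x hx => hvalid x (by simp [hx])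
    rw [listMat_append_single]
    have h2 := gate_step hkn (listMat n L) hk1 g hg
    have h3 := ih hL'
    have h4 : ((L ++ [g]).filter fun g => g.1 == k - 1).length =
        (L.filter fun g => g.1 == k - 1).length + (if g.1 = k - 1 then 1 else 0) := by
      rw [List.filter_append, List.length_append]
      congr 1
      by_cases h : g.1 = k - 1
      · simp [List.filter_singleton, h]
      · simp [List.filter_singleton, h]
    rw [h4]
    exact h2.trans (Nat.add_le_add_right h3 _)
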